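/- Let d ≤ n and let P be a d×n integer matrix of rank d. Let a^H : ℤ^n → ℂ be the n-dimensional Haar low-pass filter, a^H(k) = 2^{-n} for k ∈ {0,1}^n and 0 otherwise, and let a_P := P a^H be the box spline refinement filter. Then the following are equivalent: (i) P^T ω ∉ 2ℤ^n for every ω ∈ {0,1}^d \ {0}; (ii) a_P has sum rules of order at least one, i.e., Σ_{k∈ℤ^d} a_P(γ + 2k) = 2^{-d} for every γ ∈ {0,1}^d. -/

import Mathlib

/-!
Summing `a_P` over a coset `γ + 2ℤ^d` counts, with weight `2^{-n}`, the vertices `b ∈ {0,1}^n`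
with `Pb ≡ γ mod 2`. So the sum rules say that every fibre of `Q = P mod 2 : 𝔽₂ⁿ → 𝔽₂ᵈ` has
`2^{n-d}` elements, which holds iff `Q` is surjective, i.e. iff `Qᵀ` is injective; and that is
condition (i) read over `𝔽₂`, since binary integer vectors are exactly the lifts of `𝔽₂`-vectors.
-/

open scoped BigOperators

/-- The `n`-dimensional Haar low-pass filter: value `2^{-n}` on `{0,1}^n ⊆ ℤ^n`. -/
noncomputable def haarFilter (n : ℕ) : (Fin n → ℤ) → ℂ :=
  fun k => if ∀ i, k i = 0 ∨ k i = 1 then ((2 : ℂ) ^ n)⁻¹ else 0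

/-- The projected filter `(Pa)(j) := Σ_{k ∈ ℤ^n, Pk = j} a(k)`. -/
noncomputable def projFilter {d n : ℕ} (P : Matrix (Fin d) (Fin n) ℤ)
    (a : (Fin n → ℤ) → ℂ) : (Fin d → ℤ) → ℂ :=
  fun j => ∑ᶠ (k : Fin n → ℤ) (_ : P.mulVec k = j), a k

open Matrix Finset

theorem Matrix.mulVec_surjective_iff_vecMul_injective {m n K : Type*} [Field K] [Fintype m]
    [Fintype n] (A : Matrix m n K) :
    Function.Surjective A.mulVec ↔ Function.Injective A.vecMul := by
  rw [vecMul_injective_iff, linearIndependent_iff_card_eq_finrank_span, Set.finrank,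
    ← rank_eq_finrank_span_row, rank, ← Module.finrank_fintype_fun_eq_card K, eq_comm,
    ← Submodule.eq_top_iff_finrank_eq, LinearMap.range_eq_top]
  rfl

theorem AddMonoidHom.card_fiber_mul_card_of_surjective {G M F : Type*} [AddGroup G] [Fintype G]
    [AddMonoid M] [Fintype M] [DecidableEq M] [FunLike F G M] [AddMonoidHomClass F G M] (f : F)
    (hf : Function.Surjective f) (y : M) :
    #{g | f g = y} * Fintype.card M = Fintype.card G := by
  calc #{g | f g = y} * Fintype.card M
      = ∑ y' : M, #{g | f g = y'} := by
        rw [sum_congr rfl fun y' _ => card_fiber_eq_of_mem_range f (hf y') (hf y), sum_const,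
          smul_eq_mul, mul_comm, card_univ]
    _ = Fintype.card G := (card_eq_sum_card_fiberwise fun _ _ => mem_univ _).symm

section ModTwo

variable {ι : Type*}

def modTwo (v : ι → ℤ) : ι → ZMod 2 := fun i => v i

lemma modTwo_eq_modTwo_iff {v w : ι → ℤ} :
    modTwo v = modTwo w ↔ ∃ m : ι → ℤ, v = fun i => w i + 2 * m i := by
  simp only [funext_iff, modTwo, ZMod.intCast_eq_intCast_iff_dvd_sub, Nat.cast_ofNat]
  constructor
  · intro h
    choose m hm using h
    exact ⟨fun i => -m i, fun i => by linarith [hm i]⟩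
  · rintro ⟨m, hm⟩ i
    exact ⟨-m i, by rw [hm i]; ring⟩

lemma modTwo_eq_zero_iff {v : ι → ℤ} : modTwo v = 0 ↔ ∀ i, (2 : ℤ) ∣ v i := by
  simp only [funext_iff, modTwo, Pi.zero_apply]
  exact forall_congr' fun i => ZMod.intCast_zmod_eq_zero_iff_dvd (v i) 2

lemma modTwo_mulVec {κ : Type*} [Fintype κ] (P : Matrix ι κ ℤ) (k : κ → ℤ) :
    modTwo (P *ᵥ k) = P.map (Int.cast : ℤ → ZMod 2) *ᵥ modTwo k :=
  funext fun i => RingHom.map_mulVec (Int.castRingHom (ZMod 2)) P k i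

lemma bijOn_modTwo : Set.BijOn modTwo {k : ι → ℤ | ∀ i, k i = 0 ∨ k i = 1} Set.univ := by
  refine ⟨Set.mapsTo_univ _ _, fun k hk l hl hkl => funext fun i => ?_, fun b _ => ?_⟩
  · have := congrFun hkl i
    rcases hk i with h | h <;> rcases hl i with h' | h' <;> simp_all [modTwo]
  · refine ⟨fun i => (b i).val, fun i => ?_, funext fun i => by simp [modTwo]⟩
    have := ZMod.val_lt (b i)
    beta_reduce
    omega

lemma forall_iff_forall_binary_modTwo {p : (ι → ZMod 2) → Prop} :
    (∀ w, p w) ↔ ∀ k : ι → ℤ, (∀ i, k i = 0 ∨ k i = 1) → p (modTwo k) := by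
  simpa using bijOn_modTwo.forall (p := p)

end ModTwo

lemma finsum_ite_eq_add_two_mul {ι M : Type*} [DecidableEq (ι → ℤ)]
    [DecidableEq (ι → ZMod 2)] [AddCommMonoid M] (v γ : ι → ℤ) (c : M) :
    ∑ᶠ m : ι → ℤ, (if v = (fun i => γ i + 2 * m i) then c else 0) =
      if modTwo v = modTwo γ then c else 0 := by
  split_ifs with h
  · obtain ⟨m₀, hm₀⟩ := modTwo_eq_modTwo_iff.mp h
    rw [finsum_eq_single _ m₀ fun m hm => if_neg fun hv => hm (funext fun i => ?_), if_pos hm₀]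
    have := congrFun (hv.symm.trans hm₀) i
    omega
  · exact finsum_eq_zero_of_forall_eq_zero fun m => if_neg fun hv => h (modTwo_eq_modTwo_iff.mpr ⟨m, hv⟩)

lemma projFilter_eq_sum {d n : ℕ} (P : Matrix (Fin d) (Fin n) ℤ) (a : (Fin n → ℤ) → ℂ)
    {s : Finset (Fin n → ℤ)} (hs : Function.support a ⊆ s) (j : Fin d → ℤ) :
    projFilter P a j = ∑ k ∈ s, if P *ᵥ k = j then a k else 0 := by
  rw [projFilter, finsum_congr fun k => finsum_eq_if]
  refine finsum_eq_sum_of_support_subset _ fun k hk => hs ?_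
  contrapose! hk
  simp [Function.notMem_support.mp hk]

lemma finsum_projFilter_add_two_mul {d n : ℕ} (P : Matrix (Fin d) (Fin n) ℤ)
    (a : (Fin n → ℤ) → ℂ) {s : Finset (Fin n → ℤ)} (hs : Function.support a ⊆ s)
    (γ : Fin d → ℤ) :
    ∑ᶠ m : Fin d → ℤ, projFilter P a (fun i => γ i + 2 * m i) =
      ∑ k ∈ s, if modTwo (P *ᵥ k) = modTwo γ then a k else 0 := by
  simp_rw [projFilter_eq_sum P a hs]
  rw [finsum_sum_comm]
  · simp_rw [finsum_ite_eq_add_two_mul]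
  · intro k _
    refine Set.Subsingleton.finite fun m hm m' hm' => funext fun i => ?_
    have := congrFun ((ite_ne_right_iff.mp hm).1.symm.trans (ite_ne_right_iff.mp hm').1) i
    omega

lemma coe_piFinset_binary (n : ℕ) :
    ((Fintype.piFinset fun _ : Fin n => ({0, 1} : Finset ℤ)) : Set (Fin n → ℤ)) =
      {k : Fin n → ℤ | ∀ i, k i = 0 ∨ k i = 1} := by
  ext k
  simp

lemma support_haarFilter_subset (n : ℕ) :
    Function.support (haarFilter n) ⊆
      ↑(Fintype.piFinset fun _ : Fin n => ({0, 1} : Finset ℤ)) := by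
  rw [coe_piFinset_binary]
  intro k hk
  by_contra h
  exact hk (if_neg h)

lemma finsum_projFilter_haarFilter {d n : ℕ} (P : Matrix (Fin d) (Fin n) ℤ)
    (γ : Fin d → ℤ) :
    ∑ᶠ m : Fin d → ℤ, projFilter P (haarFilter n) (fun i => γ i + 2 * m i) =
      #{b | P.map (Int.cast : ℤ → ZMod 2) *ᵥ b = modTwo γ} * ((2 : ℂ) ^ n)⁻¹ := by
  rw [finsum_projFilter_add_two_mul P _ (support_haarFilter_subset n), ← sum_filter]
  have hcard : #{k ∈ Fintype.piFinset fun _ => {0, 1} | modTwo (P *ᵥ k) = modTwo γ} =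
      #{b | P.map (Int.cast : ℤ → ZMod 2) *ᵥ b = modTwo γ} := by
    have h := bijOn_modTwo (ι := Fin n)
    rw [← coe_piFinset_binary] at h
    refine card_nbij modTwo (fun k hk => ?_) (h.injOn.mono ?_) fun b hb => ?_
    · simpa [modTwo_mulVec] using (mem_filter.mp hk).2
    · exact coe_subset.mpr (filter_subset _ _)
    · obtain ⟨k, hk, rfl⟩ := h.surjOn (Set.mem_univ b)
      exact ⟨k, mem_filter.mpr ⟨hk, by simpa [modTwo_mulVec] using hb⟩, rfl⟩
  rw [← hcard, ← nsmul_eq_mul, ← sum_const]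
  refine sum_congr rfl fun k hk => if_pos ?_
  simpa using (mem_filter.mp hk).1

lemma sum_rules_iff_mulVec_surjective {d n : ℕ} (P : Matrix (Fin d) (Fin n) ℤ) :
    (∀ γ : Fin d → ℤ, (∀ i, γ i = 0 ∨ γ i = 1) →
      (∑ᶠ k : Fin d → ℤ, projFilter P (haarFilter n) (fun i => γ i + 2 * k i)) =
        ((2 : ℂ) ^ d)⁻¹) ↔
    Function.Surjective (P.map (Int.cast : ℤ → ZMod 2)).mulVec := by
  set Q := P.map (Int.cast : ℤ → ZMod 2)
  simp_rw [finsum_projFilter_haarFilter]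
  refine (forall_iff_forall_binary_modTwo (p := fun c => #{b | Q *ᵥ b = c} * ((2 : ℂ) ^ n)⁻¹ =
    ((2 : ℂ) ^ d)⁻¹)).symm.trans ⟨fun h c => ?_, fun hQ c => ?_⟩
  · have hne : #{b | Q *ᵥ b = c} ≠ 0 := fun h0 => by simpa [h0] using (h c).symm
    obtain ⟨b, hb⟩ := card_ne_zero.mp hne
    exact ⟨b, (mem_filter.mp hb).2⟩
  · have hcard := AddMonoidHom.card_fiber_mul_card_of_surjective Q.mulVecLin hQ c
    simp only [mulVecBilin_apply, Fintype.card_pi, ZMod.card, prod_const, card_univ,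
      Fintype.card_fin] at hcard
    field_simp
    exact_mod_cast hcard

lemma parity_condition_iff_vecMul_injective {m n : Type*} [Fintype m] (P : Matrix m n ℤ) :
    (∀ ω : m → ℤ, (∀ i, ω i = 0 ∨ ω i = 1) → ω ≠ 0 →
      ¬ ∀ j, (2 : ℤ) ∣ P.transpose.mulVec ω j) ↔
    Function.Injective (P.map (Int.cast : ℤ → ZMod 2)).vecMul := by
  set Q := P.map (Int.cast : ℤ → ZMod 2)
  rw [← coe_vecMulLinear, injective_iff_map_eq_zero, forall_iff_forall_binary_modTwo]
  refine forall₂_congr fun ω hω => ?_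
  have hzero : modTwo ω = 0 ↔ ω = 0 := by
    rw [← show modTwo (0 : m → ℤ) = 0 from funext fun _ => Int.cast_zero]
    exact bijOn_modTwo.injOn.eq_iff hω fun _ => Or.inl rfl
  rw [ne_eq, ← hzero, ← modTwo_eq_zero_iff, modTwo_mulVec, transpose_map, mulVec_transpose]
  exact not_imp_not

theorem boxspline_filter_sum_rules_iff_general (d n : ℕ) (P : Matrix (Fin d) (Fin n) ℤ) :
    (∀ ω : Fin d → ℤ, (∀ i, ω i = 0 ∨ ω i = 1) → ω ≠ 0 →
      ¬ ∀ j, (2 : ℤ) ∣ P.transpose.mulVec ω j) ↔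
    (∀ γ : Fin d → ℤ, (∀ i, γ i = 0 ∨ γ i = 1) →
      (∑ᶠ k : Fin d → ℤ, projFilter P (haarFilter n) (fun i => γ i + 2 * k i)) =
        ((2 : ℂ) ^ d)⁻¹) := by
  rw [parity_condition_iff_vecMul_injective, sum_rules_iff_mulVec_surjective,
    mulVec_surjective_iff_vecMul_injective]

/-- For the box spline refinement filter `a_P = P a^H`, the condition
`Pᵀω ∉ 2ℤ^n` for all `ω ∈ {0,1}^d \ {0}` is equivalent to `a_P` having sum rules of
order at least one: `Σ_{k ∈ ℤ^d} a_P(γ + 2k) = 2^{-d}` for all `γ ∈ {0,1}^d`. -/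
theorem boxspline_filter_sum_rules_iff (d n : ℕ) (hdn : d ≤ n)
    (P : Matrix (Fin d) (Fin n) ℤ) (hrank : P.rank = d) :
    (∀ ω : Fin d → ℤ, (∀ i, ω i = 0 ∨ ω i = 1) → ω ≠ 0 →
      ¬ ∀ j, (2 : ℤ) ∣ P.transpose.mulVec ω j) ↔
    (∀ γ : Fin d → ℤ, (∀ i, γ i = 0 ∨ γ i = 1) →
      (∑ᶠ k : Fin d → ℤ, projFilter P (haarFilter n) (fun i => γ i + 2 * k i)) =
        ((2 : ℂ) ^ d)⁻¹) :=
  boxspline_filter_sum_rules_iff_general d n P
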